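/- Let R > 0. There exists a constant C = C(R) with the following property: for every ω ∈ L²(ℝ²) supported in the closed ball of radius R and with ∫_{ℝ²} ω dx = 0, the velocity u = K ∗ ω given by the Biot-Savart law belongs to L²(ℝ²; ℝ²) and satisfies ‖u‖_{L²(ℝ²)} ≤ C ‖ω‖_{L²(ℝ²)}. -/

import Mathlib

open MeasureTheory Filter Metric Set
open scoped ENNReal

noncomputable section

/-- The plane `ℝ²` as a Euclidean space. -/
abbrev Plane := EuclideanSpace ℝ (Fin 2)

/-- The Biot-Savart kernel `K(x) = x⊥ / (2π |x|²)`, where `x⊥ = (-x₂, x₁)`. -/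
def biotSavartKernel (x : Plane) : Plane :=
  (2 * Real.pi * ‖x‖ ^ 2)⁻¹ • (WithLp.equiv 2 (Fin 2 → ℝ)).symm ![-(x 1), x 0]

/-- The velocity associated to a vorticity `ω` via the Biot-Savart law `u = K ∗ ω`. -/
def biotSavartVelocity (ω : Plane → ℝ) (x : Plane) : Plane :=
  ∫ y, ω y • biotSavartKernel (x - y)

/-!
Split the plane at radius `2R`. Near the support, `|u| ≤ |ω| ∗ (|K| 1_{B(0,3R)})` and
`|K(x)| = 1 / (2π|x|)` is locally integrable in `ℝ²`, so Young's inequality `L¹ ∗ L² ⊆ L²`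
(proved by the Schur test) controls `u` on `B(0,2R)`. Far away, the zero mean of `ω` lets one
replace `K(x - y)` by `K(x - y) - K(x)`; since `K` is a rotated inversion `x ↦ x / |x|²`, this
difference has size exactly `|y| / (2π|x - y||x|) ≤ R / (π|x|²)`. Hence
`|u(x)| ≤ (R/π) ‖ω‖₁ |x|⁻²`, which is square integrable outside a ball in `ℝ²`, and
`‖ω‖₁ ≤ |B(0,R)|^{1/2} ‖ω‖₂`.
-/

section LebesgueSpaces

variable {α : Type*} [MeasurableSpace α] {μ : Measure α}

lemma eLpNorm_two_pow_two {ε : Type*} [ENorm ε] (f : α → ε) :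
    eLpNorm f 2 μ ^ 2 = ∫⁻ x, ‖f x‖ₑ ^ 2 ∂μ := by
  simpa [ENNReal.rpow_two] using
    eLpNorm_nnreal_pow_eq_lintegral (f := f) (μ := μ) (p := 2) two_ne_zero

lemma eLpNorm_le_eLpNorm_mul_rpow_measure_of_support_subset {E : Type*} [NormedAddCommGroup E]
    {f : α → E} {s : Set α} {p q : ℝ≥0∞} (hpq : p ≤ q) (hfs : f.support ⊆ s)
    (hf : AEStronglyMeasurable f μ) :
    eLpNorm f p μ ≤ eLpNorm f q μ * μ s ^ (1 / p.toReal - 1 / q.toReal) := by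
  rw [← eLpNorm_restrict_eq_of_support_subset hfs, ← Measure.restrict_apply_univ s]
  exact (eLpNorm_le_eLpNorm_mul_rpow_measure_univ hpq hf.restrict).trans
    (mul_le_mul_left (eLpNorm_restrict_le f q μ s) _)

lemma ENNReal.lintegral_mul_sq_le {f w : α → ℝ≥0∞} (hf : AEMeasurable f μ) (hw : AEMeasurable w μ) :
    (∫⁻ a, f a * w a ∂μ) ^ 2 ≤ (∫⁻ a, f a ^ 2 * w a ∂μ) * ∫⁻ a, w a ∂μ := by
  have hsqrt : ∀ a : ℝ≥0∞, (a ^ (1 / 2 : ℝ)) ^ 2 = a := fun a => by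
    rw [← ENNReal.rpow_natCast, ← ENNReal.rpow_mul]; norm_num
  have hw' := hw.pow_const (1 / 2 : ℝ)
  have holder := ENNReal.lintegral_mul_le_Lp_mul_Lq μ Real.HolderConjugate.two_two
    (hf.mul hw') hw'
  simp only [Pi.mul_apply, ENNReal.rpow_two, mul_pow, hsqrt, mul_assoc, ← pow_two] at holder
  calc (∫⁻ a, f a * w a ∂μ) ^ 2
      ≤ ((∫⁻ a, f a ^ 2 * w a ∂μ) ^ (1 / 2 : ℝ) * (∫⁻ a, w a ∂μ) ^ (1 / 2 : ℝ)) ^ 2 := by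
        gcongr
    _ = (∫⁻ a, f a ^ 2 * w a ∂μ) * ∫⁻ a, w a ∂μ := by rw [mul_pow, hsqrt, hsqrt]

end LebesgueSpaces

section Young

variable {G : Type*} [MeasurableSpace G] [AddCommGroup G] [MeasurableAdd₂ G] [MeasurableNeg G]
  {μ : Measure G} [SFinite μ] [μ.IsAddLeftInvariant] [μ.IsNegInvariant]

theorem lintegral_sq_lintegral_mul_sub_le {f g : G → ℝ≥0∞} (hf : AEMeasurable f μ)
    (hg : Measurable g) :
    ∫⁻ x, (∫⁻ y, f y * g (x - y) ∂μ) ^ 2 ∂μ ≤ (∫⁻ z, g z ∂μ) ^ 2 * ∫⁻ y, f y ^ 2 ∂μ := by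
  have hF : AEMeasurable (Function.uncurry fun x y => f y ^ 2 * g (x - y)) (μ.prod μ) :=
    (hf.pow_const 2).comp_snd.mul (hg.comp measurable_sub).aemeasurable
  have hF_int : AEMeasurable (fun x => ∫⁻ y, f y ^ 2 * g (x - y) ∂μ) μ :=
    hF.lintegral_prod_right'
  have hg_translate : ∀ y, ∫⁻ x, f y ^ 2 * g (x - y) ∂μ = f y ^ 2 * ∫⁻ z, g z ∂μ := fun y => by
    rw [lintegral_const_mul _ (by fun_prop : Measurable fun x => g (x - y)),
      lintegral_sub_right_eq_self g y]
  calc ∫⁻ x, (∫⁻ y, f y * g (x - y) ∂μ) ^ 2 ∂μ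
      ≤ ∫⁻ x, (∫⁻ y, f y ^ 2 * g (x - y) ∂μ) * ∫⁻ z, g z ∂μ ∂μ := by
        refine lintegral_mono fun x => ?_
        rw [← lintegral_sub_left_eq_self g x]
        exact ENNReal.lintegral_mul_sq_le hf (by fun_prop)
    _ = (∫⁻ y, ∫⁻ x, f y ^ 2 * g (x - y) ∂μ ∂μ) * ∫⁻ z, g z ∂μ := by
        rw [lintegral_mul_const'' _ hF_int, lintegral_lintegral_swap hF]
    _ = (∫⁻ z, g z ∂μ) ^ 2 * ∫⁻ y, f y ^ 2 ∂μ := by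
        simp_rw [hg_translate]
        rw [lintegral_mul_const'' _ (hf.pow_const 2)]
        ring

theorem eLpNorm_two_lintegral_mul_sub_le {f g : G → ℝ≥0∞} (hf : AEMeasurable f μ)
    (hg : Measurable g) :
    eLpNorm (fun x => ∫⁻ y, f y * g (x - y) ∂μ) 2 μ ≤ (∫⁻ z, g z ∂μ) * eLpNorm f 2 μ := by
  rw [← ENNReal.pow_le_pow_left_iff two_ne_zero, mul_pow, eLpNorm_two_pow_two,
    eLpNorm_two_pow_two]
  simpa only [enorm_eq_self] using lintegral_sq_lintegral_mul_sub_le hf hg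

end Young

section Decay

variable {E : Type*} [NormedAddCommGroup E] [NormedSpace ℝ E] [FiniteDimensional ℝ E]
  [MeasurableSpace E] [BorelSpace E] {μ : Measure E} [μ.IsAddHaarMeasure]

lemma integrableOn_compl_closedBall_inv_norm_pow {r : ℝ} (hr : 0 < r) {n : ℕ}
    (hn : Module.finrank ℝ E < n) :
    IntegrableOn (fun x : E => (‖x‖ ^ n)⁻¹) (closedBall 0 r)ᶜ μ := by
  have hdom := ((integrable_one_add_norm (μ := μ) (r := n) (by exact_mod_cast hn)).const_mul
    (((1 + r) / r) ^ n)).integrableOn (s := (closedBall 0 r)ᶜ)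
  refine hdom.mono' (by fun_prop) <|
    (ae_restrict_iff' measurableSet_closedBall.compl).2 (ae_of_all _ fun x hx => ?_)
  have hrx : r < ‖x‖ := by simpa using hx
  have hx0 : 0 < ‖x‖ := hr.trans hrx
  rw [Real.rpow_neg (by positivity), Real.rpow_natCast, norm_inv, norm_pow, norm_norm,
    ← inv_pow, ← div_eq_mul_inv, ← div_pow]
  gcongr
  rw [inv_le_comm₀ hx0 (by positivity), inv_div, div_le_iff₀ (by positivity), mul_div_assoc',
    le_div_iff₀ hr]
  nlinarith

lemma memLp_two_indicator_compl_closedBall_inv_norm_pow {r : ℝ} (hr : 0 < r) {n : ℕ}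
    (hn : Module.finrank ℝ E < 2 * n) :
    MemLp ((closedBall (0 : E) r)ᶜ.indicator fun x => (‖x‖ ^ n)⁻¹) 2 μ := by
  have hmeas : Measurable ((closedBall (0 : E) r)ᶜ.indicator fun x => (‖x‖ ^ n)⁻¹) :=
    (by fun_prop : Measurable fun x : E => (‖x‖ ^ n)⁻¹).indicator measurableSet_closedBall.compl
  rw [memLp_two_iff_integrable_sq hmeas.aestronglyMeasurable]
  have hsq : (fun x => ((closedBall (0 : E) r)ᶜ.indicator (fun x => (‖x‖ ^ n)⁻¹) x) ^ 2) =
      (closedBall (0 : E) r)ᶜ.indicator fun x => (‖x‖ ^ (2 * n))⁻¹ := by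
    ext x
    by_cases hx : x ∈ (closedBall (0 : E) r)ᶜ <;> simp [hx, pow_mul', inv_pow]
  rw [hsq, integrable_indicator_iff measurableSet_closedBall.compl]
  exact integrableOn_compl_closedBall_inv_norm_pow hr hn

end Decay

def planePerp : Plane →ₗᵢ[ℝ] Plane where
  toFun x := (WithLp.equiv 2 (Fin 2 → ℝ)).symm ![-(x 1), x 0]
  map_add' x y := by ext i; fin_cases i <;> simp; ring
  map_smul' c x := by ext i; fin_cases i <;> simp
  norm_map' x := by simp [EuclideanSpace.norm_eq, Fin.sum_univ_two, add_comm]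

lemma biotSavartKernel_eq_smul_perp (x : Plane) :
    biotSavartKernel x = (2 * Real.pi)⁻¹ • planePerp ((1 / ‖x‖) ^ 2 • x) := by
  rw [map_smul, smul_smul, biotSavartKernel]
  congr 1
  field_simp

lemma norm_biotSavartKernel (x : Plane) : ‖biotSavartKernel x‖ = (2 * Real.pi)⁻¹ * ‖x‖⁻¹ := by
  rcases eq_or_ne x 0 with rfl | hx
  · simp [biotSavartKernel]
  have := norm_pos_iff.2 hx
  rw [biotSavartKernel_eq_smul_perp, norm_smul, LinearIsometry.norm_map, norm_smul]
  simp [abs_of_pos Real.pi_pos]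
  field_simp

lemma norm_biotSavartKernel_sub_biotSavartKernel {x y : Plane} (hx : x ≠ 0) (hy : y ≠ 0) :
    ‖biotSavartKernel x - biotSavartKernel y‖ = ‖x - y‖ / (2 * Real.pi * (‖x‖ * ‖y‖)) := by
  rw [biotSavartKernel_eq_smul_perp, biotSavartKernel_eq_smul_perp, ← smul_sub, ← map_sub,
    norm_smul, LinearIsometry.norm_map, ← dist_eq_norm, dist_div_norm_sq_smul hx hy,
    dist_eq_norm]
  simp [abs_of_pos Real.pi_pos]
  field_simp

@[fun_prop]
lemma measurable_biotSavartKernel : Measurable biotSavartKernel := by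
  simp_rw [funext biotSavartKernel_eq_smul_perp]
  fun_prop

lemma locallyIntegrable_biotSavartKernel : LocallyIntegrable biotSavartKernel volume := by
  refine locallyIntegrable_of_norm_le_rpow (α := 1) (C := (2 * Real.pi)⁻¹) (by simp) (by simp)
    (ae_of_all _ fun x => ?_) measurable_biotSavartKernel.aestronglyMeasurable
  rw [norm_biotSavartKernel, Real.rpow_neg_one]

lemma norm_biotSavartKernel_sub_sub_le_of_two_mul_lt {R : ℝ} {x y : Plane} (hy : ‖y‖ ≤ R)
    (hx : 2 * R < ‖x‖) :
    ‖biotSavartKernel (x - y) - biotSavartKernel x‖ ≤ R / (Real.pi * ‖x‖ ^ 2) := by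
  have hR : 0 ≤ R := (norm_nonneg y).trans hy
  have hxy : ‖x‖ / 2 ≤ ‖x - y‖ := by linarith [norm_sub_norm_le x y]
  have hx0 : 0 < ‖x‖ := by linarith
  rw [norm_biotSavartKernel_sub_biotSavartKernel (norm_pos_iff.1 (by linarith))
    (norm_pos_iff.1 hx0), sub_sub_cancel_left, norm_neg]
  calc ‖y‖ / (2 * Real.pi * (‖x - y‖ * ‖x‖))
      ≤ R / (2 * Real.pi * (‖x‖ / 2 * ‖x‖)) := by gcongr
    _ = R / (Real.pi * ‖x‖ ^ 2) := by ring

section Velocity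

variable {ω : Plane → ℝ} {R : ℝ}

lemma aestronglyMeasurable_biotSavartVelocity (hω : AEStronglyMeasurable ω volume) :
    AEStronglyMeasurable (biotSavartVelocity ω) volume := by
  have hF : AEStronglyMeasurable (fun p : Plane × Plane => ω p.2 • biotSavartKernel (p.1 - p.2))
      (volume.prod volume) :=
    hω.comp_snd.smul (Measurable.aestronglyMeasurable (by fun_prop))
  exact hF.integral_prod_right'

lemma enorm_biotSavartVelocity_le (ω : Plane → ℝ) (x : Plane) :
    ‖biotSavartVelocity ω x‖ₑ ≤ ∫⁻ y, ‖ω y‖ₑ * ‖biotSavartKernel (x - y)‖ₑ :=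
  (enorm_integral_le_lintegral_enorm _).trans_eq (by simp_rw [enorm_smul])

lemma eLpNorm_indicator_closedBall_biotSavartVelocity_le (hω : AEMeasurable ω volume)
    (hsupp : ω.support ⊆ closedBall 0 R) :
    eLpNorm ((closedBall 0 (2 * R)).indicator (biotSavartVelocity ω)) 2 volume ≤
      (∫⁻ z in closedBall 0 (3 * R), ‖biotSavartKernel z‖ₑ) * eLpNorm ω 2 volume := by
  set g := (closedBall (0 : Plane) (3 * R)).indicator fun z => ‖biotSavartKernel z‖ₑ
  have hg : Measurable g := measurable_biotSavartKernel.enorm.indicator measurableSet_closedBall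
  calc eLpNorm ((closedBall 0 (2 * R)).indicator (biotSavartVelocity ω)) 2 volume
      ≤ eLpNorm (fun x => ∫⁻ y, ‖ω y‖ₑ * g (x - y)) 2 volume := by
        refine eLpNorm_mono_enorm fun x => ?_
        rw [enorm_eq_self]
        by_cases hx : x ∈ closedBall 0 (2 * R)
        · rw [indicator_of_mem hx]
          refine (enorm_biotSavartVelocity_le ω x).trans (lintegral_mono fun y => ?_)
          by_cases hy : ω y = 0
          · simp [hy]
          have hxy : x - y ∈ closedBall 0 (3 * R) := by
            rw [mem_closedBall_zero_iff] at hx ⊢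
            linarith [norm_sub_le x y, mem_closedBall_zero_iff.1 (hsupp hy)]
          simp only [g, indicator_of_mem hxy, le_refl]
        · simp [hx]
    _ ≤ (∫⁻ z, g z) * eLpNorm (fun y => ‖ω y‖ₑ) 2 volume :=
        eLpNorm_two_lintegral_mul_sub_le hω.enorm hg
    _ = (∫⁻ z in closedBall 0 (3 * R), ‖biotSavartKernel z‖ₑ) * eLpNorm ω 2 volume := by
        rw [lintegral_indicator measurableSet_closedBall, eLpNorm_enorm]

lemma norm_biotSavartVelocity_le_of_two_mul_lt (hω : Integrable ω)
    (hsupp : ω.support ⊆ closedBall 0 R) (hzero : ∫ y, ω y = 0) {x : Plane}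
    (hx : 2 * R < ‖x‖) :
    ‖biotSavartVelocity ω x‖ ≤ (R / Real.pi * ∫ y, ‖ω y‖) * (‖x‖ ^ 2)⁻¹ := by
  have hdiff : ∀ y, ‖ω y • (biotSavartKernel (x - y) - biotSavartKernel x)‖ ≤
      ‖ω y‖ * (R / (Real.pi * ‖x‖ ^ 2)) := fun y => by
    rw [norm_smul]
    by_cases hy : ω y = 0
    · simp [hy]
    gcongr
    exact norm_biotSavartKernel_sub_sub_le_of_two_mul_lt (mem_closedBall_zero_iff.1 (hsupp hy)) hx
  have hdiff_int : Integrable fun y => ω y • (biotSavartKernel (x - y) - biotSavartKernel x) :=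
    (hω.norm.mul_const _).mono'
      (hω.aestronglyMeasurable.smul (Measurable.aestronglyMeasurable (by fun_prop)))
      (ae_of_all _ hdiff)
  have hu : biotSavartVelocity ω x =
      ∫ y, ω y • (biotSavartKernel (x - y) - biotSavartKernel x) := by
    calc biotSavartVelocity ω x
        = ∫ y, (ω y • (biotSavartKernel (x - y) - biotSavartKernel x) +
            ω y • biotSavartKernel x) := by
          simp_rw [smul_sub, sub_add_cancel]; rfl
      _ = ∫ y, ω y • (biotSavartKernel (x - y) - biotSavartKernel x) := by
          rw [integral_add hdiff_int (hω.smul_const _), integral_smul_const, hzero, zero_smul,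
            add_zero]
  calc ‖biotSavartVelocity ω x‖
      ≤ ∫ y, ‖ω y‖ * (R / (Real.pi * ‖x‖ ^ 2)) := by
        rw [hu]; exact norm_integral_le_of_norm_le (hω.norm.mul_const _) (ae_of_all _ hdiff)
    _ = (R / Real.pi * ∫ y, ‖ω y‖) * (‖x‖ ^ 2)⁻¹ := by
        rw [integral_mul_const]; field_simp

lemma eLpNorm_indicator_compl_closedBall_biotSavartVelocity_le (hω : Integrable ω)
    (hsupp : ω.support ⊆ closedBall 0 R) (hzero : ∫ y, ω y = 0) :
    eLpNorm ((closedBall 0 (2 * R))ᶜ.indicator (biotSavartVelocity ω)) 2 volume ≤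
      ENNReal.ofReal (R / Real.pi * ∫ y, ‖ω y‖) *
        eLpNorm ((closedBall (0 : Plane) (2 * R))ᶜ.indicator fun x => (‖x‖ ^ 2)⁻¹) 2 volume := by
  refine eLpNorm_le_mul_eLpNorm_of_ae_le_mul (ae_of_all _ fun x => ?_) 2
  by_cases hx : x ∈ (closedBall (0 : Plane) (2 * R))ᶜ
  · rw [indicator_of_mem hx, indicator_of_mem hx, Real.norm_of_nonneg (by positivity)]
    exact norm_biotSavartVelocity_le_of_two_mul_lt hω hsupp hzero (by simpa using hx)
  · simp [hx]

end Velocity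

def biotSavartL2Bound (R : ℝ) : ℝ≥0∞ :=
  (∫⁻ z in closedBall 0 (3 * R), ‖biotSavartKernel z‖ₑ) +
    ENNReal.ofReal (R / Real.pi) * volume (closedBall (0 : Plane) R) ^ (2⁻¹ : ℝ) *
      eLpNorm ((closedBall (0 : Plane) (2 * R))ᶜ.indicator fun x => (‖x‖ ^ 2)⁻¹) 2 volume

lemma biotSavartL2Bound_ne_top {R : ℝ} (hR : 0 < R) : biotSavartL2Bound R ≠ ⊤ := by
  have hnear := (locallyIntegrable_biotSavartKernel.integrableOn_isCompact
    (isCompact_closedBall (0 : Plane) (3 * R))).hasFiniteIntegral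
  have hfar := memLp_two_indicator_compl_closedBall_inv_norm_pow (E := Plane) (μ := volume)
    (mul_pos two_pos hR) (n := 2) (by simp)
  refine ENNReal.add_ne_top.2 ⟨hnear.ne, ENNReal.mul_ne_top (ENNReal.mul_ne_top
    ENNReal.ofReal_ne_top ?_) hfar.2.ne⟩
  exact ENNReal.rpow_ne_top_of_nonneg (by norm_num) measure_closedBall_lt_top.ne

theorem eLpNorm_biotSavartVelocity_le {ω : Plane → ℝ} {R : ℝ} (hω : MemLp ω 2 volume)
    (hsupp : ω.support ⊆ closedBall 0 R) (hzero : ∫ y, ω y = 0) :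
    eLpNorm (biotSavartVelocity ω) 2 volume ≤ biotSavartL2Bound R * eLpNorm ω 2 volume := by
  have hL1 : ∫⁻ y, ‖ω y‖ₑ ≤
      eLpNorm ω 2 volume * volume (closedBall (0 : Plane) R) ^ (2⁻¹ : ℝ) := by
    rw [← eLpNorm_one_eq_lintegral_enorm]
    convert eLpNorm_le_eLpNorm_mul_rpow_measure_of_support_subset one_le_two hsupp hω.1 using 3
    norm_num
  have hint : Integrable ω := ⟨hω.1, hL1.trans_lt <| ENNReal.mul_lt_top hω.2 <|
    ENNReal.rpow_lt_top_of_nonneg (by norm_num) measure_closedBall_lt_top.ne⟩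
  have hu := aestronglyMeasurable_biotSavartVelocity hω.1
  have hB : MeasurableSet (closedBall (0 : Plane) (2 * R)) := measurableSet_closedBall
  have hsplit := eLpNorm_add_le (hu.indicator hB) (hu.indicator hB.compl) one_le_two
  rw [indicator_self_add_compl] at hsplit
  refine hsplit.trans ?_
  rw [biotSavartL2Bound, add_mul, mul_right_comm _ _ (eLpNorm ω 2 volume)]
  gcongr
  · exact eLpNorm_indicator_closedBall_biotSavartVelocity_le hω.1.aemeasurable hsupp
  · refine (eLpNorm_indicator_compl_closedBall_biotSavartVelocity_le hint hsupp hzero).trans ?_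
    gcongr
    rw [ENNReal.ofReal_mul' (integral_nonneg fun _ => norm_nonneg _),
      ofReal_integral_norm_eq_lintegral_enorm hint, mul_assoc, mul_comm (volume _ ^ _)]
    gcongr

/-- **Global `L²` estimate on the Biot-Savart velocity of a compactly supported,
zero-average vorticity.**  For every `R > 0` there is a constant `C = C(R)` such that for
every `ω ∈ L²(ℝ²)` supported in the closed ball of radius `R` and with `∫ ω = 0`, the
velocity `u = K ∗ ω` belongs to `L²(ℝ²; ℝ²)` with `‖u‖_{L²} ≤ C ‖ω‖_{L²}`. -/
theorem biotSavartVelocity_L2_estimate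
    (R : ℝ) (hR : 0 < R) :
    ∃ C : ℝ, 0 < C ∧
      ∀ ω : Plane → ℝ,
        MemLp ω 2 volume →
        Function.support ω ⊆ Metric.closedBall 0 R →
        (∫ x, ω x) = 0 →
        MemLp (biotSavartVelocity ω) 2 volume ∧
        eLpNorm (biotSavartVelocity ω) 2 volume ≤
          ENNReal.ofReal C * eLpNorm ω 2 volume := by
  refine ⟨(biotSavartL2Bound R).toReal + 1, by positivity, fun ω hω hsupp hzero => ?_⟩
  have hC : biotSavartL2Bound R ≤ ENNReal.ofReal ((biotSavartL2Bound R).toReal + 1) :=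
    (ENNReal.le_ofReal_iff_toReal_le (biotSavartL2Bound_ne_top hR) (by positivity)).2
      (le_add_of_nonneg_right zero_le_one)
  have hbound := (eLpNorm_biotSavartVelocity_le hω hsupp hzero).trans (mul_le_mul_left hC _)
  exact ⟨⟨aestronglyMeasurable_biotSavartVelocity hω.1,
    hbound.trans_lt (ENNReal.mul_lt_top ENNReal.ofReal_lt_top hω.2)⟩, hbound⟩

end
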